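/- arXiv:1504.03997 — 5 statements merged into one kernel-verified Lean document; each statement's English description precedes it below -/
import Mathlib

section
/- Let 1/3 < γ < 1, c_γ = (1−γ)·(2γ)^{γ/(1−γ)}, f(s) = c_γ·s^{2γ/(γ−1)}, let 0 < α₂ < 1/3 and δ > 0. Let ψ : ℝ² × ℝ → ℝ be three times continuously differentiable on a neighborhood of (x₀, t₀), let v ∈ ℝ² be a unit vector, and for each ε ∈ (0,1) let b_ε, β_ε ∈ {−1, 1} and s_ε ∈ [δ, ε^{−α₂}]. Then, as ε → 0⁺, ψ( x₀ + b_ε ε s_ε v^⊥ + β_ε ε² f(s_ε) v, t₀ + ε² ) − ψ(x₀, t₀) − ε b_ε s_ε ⟨∇ψ(x₀,t₀), v^⊥⟩ − ε² ( ∂_t ψ(x₀,t₀) + β_ε f(s_ε) ⟨∇ψ(x₀,t₀), v⟩ + (s_ε²/2) ⟨ D²ψ(x₀,t₀)·v^⊥, v^⊥ ⟩ ) = o(ε²). -/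
open Set Filter
open scoped Topology RealInnerProductSpace

noncomputable section

/-- The Euclidean plane. -/
abbrev E2 := EuclideanSpace ℝ (Fin 2)

/-- Rotation of a vector of the plane by `π/2`: `(a,b)^⊥ = (−b,a)`. -/
def perp (v : E2) : E2 := WithLp.toLp 2 ![-(v 1), v 0]

/-! The move of the game is `(x₀, t₀) + A ε + D ε` with a long main part
`A ε = (b ε s ε ε v^⊥, 0) = O(ε^{1-α₂})` and a short part `D ε = (β ε ε² f(s ε) v, ε²) = O(ε²)`,
`f` being bounded on `[δ, ∞)`. In the second-order Taylor expansion of `ψ` at `(x₀, t₀)` the cubic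
remainder is `O(ε^{3(1-α₂)}) = o(ε²)` because `α₂ < 1/3`, and every quadratic term involving `D ε`
is `O(ε^{3-α₂}) = o(ε²)`. What is left is the linear term plus `½ D²ψ (A ε) (A ε)`, which the
partial gradient, time derivative and Hessian of `ψ` turn into the displayed expansion
(`b ε² = 1`). -/

open Asymptotics

theorem isLittleO_rpow_nhdsGT_zero {p q : ℝ} (h : p < q) :
    (fun x : ℝ => x ^ q) =o[𝓝[>] 0] fun x => x ^ p := by
  have hsmall : (fun x : ℝ => x ^ (q - p)) =o[𝓝[>] 0] fun _ => (1 : ℝ) := by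
    refine (isLittleO_one_iff ℝ).2 ?_
    have := (Real.continuousAt_rpow_const 0 (q - p) (Or.inr (sub_pos.2 h).le)).tendsto
    rw [Real.zero_rpow (sub_pos.2 h).ne'] at this
    exact this.mono_left nhdsWithin_le_nhds
  refine ((isBigO_refl (fun x : ℝ => x ^ p) _).mul_isLittleO hsmall).congr' ?_ (by simp)
  filter_upwards [self_mem_nhdsWithin] with x hx
  rw [← Real.rpow_add hx, add_sub_cancel]

theorem tendsto_rpow_nhdsGT_zero {p : ℝ} (hp : 0 < p) :
    Tendsto (fun x : ℝ => x ^ p) (𝓝[>] 0) (𝓝 0) :=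
  (isLittleO_one_iff ℝ).1 (by simpa using isLittleO_rpow_nhdsGT_zero hp)

theorem Asymptotics.IsBigO.smul_const {α E : Type*} [NormedAddCommGroup E] [NormedSpace ℝ E]
    {l : Filter α} {u g : α → ℝ} (hu : u =O[l] g) (w : E) : (fun x => u x • w) =O[l] g := by
  simpa using ((ContinuousLinearMap.toSpanSingleton ℝ w).isBigO_comp u l).trans hu

section Taylor

variable {E F : Type*} [NormedAddCommGroup E] [NormedSpace ℝ E]
  [NormedAddCommGroup F] [NormedSpace ℝ F]

theorem isBigO_norm_pow_succ_of_hasFDerivAt {G : E → F} {G' : E → E →L[ℝ] F} {n : ℕ}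
    (h0 : G 0 = 0) (hG : ∀ᶠ k in 𝓝 0, HasFDerivAt G (G' k) k)
    (hG' : G' =O[𝓝 0] fun k => ‖k‖ ^ n) : G =O[𝓝 0] fun k => ‖k‖ ^ (n + 1) := by
  obtain ⟨C, hC₀, hC⟩ := hG'.exists_pos
  obtain ⟨r, hr, hball⟩ := Metric.eventually_nhds_iff_ball.mp (hG.and hC.bound)
  refine .of_bound C (eventually_of_mem (Metric.ball_mem_nhds 0 hr) fun k hk => ?_)
  have hsub : Metric.closedBall (0 : E) ‖k‖ ⊆ Metric.ball 0 r :=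
    Metric.closedBall_subset_ball (by simpa using hk)
  have hmvt := (convex_closedBall (0 : E) ‖k‖).norm_image_sub_le_of_norm_hasFDerivWithin_le
    (f' := G') (C := C * ‖k‖ ^ n) (x := 0) (y := k)
    (fun y hy => (hball y (hsub hy)).1.hasFDerivWithinAt)
    (fun y hy => by
      have hy' : ‖y‖ ≤ ‖k‖ := by simpa using hy
      calc ‖G' y‖ ≤ C * ‖‖y‖ ^ n‖ := (hball y (hsub hy)).2
        _ ≤ C * ‖k‖ ^ n := by gcongr; simpa using pow_le_pow_left₀ (norm_nonneg y) hy' n)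
    (Metric.mem_closedBall_self (norm_nonneg k)) (by simp)
  rw [h0, sub_zero, sub_zero] at hmvt
  simpa [pow_succ, mul_assoc] using hmvt

/-- Each of the two steps integrates a derivative bound `O(‖k‖ ^ n)` into `O(‖k‖ ^ (n + 1))`;
the symmetry of the second derivative makes `D²f(z) k` the derivative of `½ D²f(z) k k`. -/
theorem ContDiffAt.isBigO_taylor_two {f : E → F} {z : E} (hf : ContDiffAt ℝ 3 f z) :
    (fun h => f (z + h) - f z - fderiv ℝ f z h - (2 : ℝ)⁻¹ • fderiv ℝ (fderiv ℝ f) z h h)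
      =O[𝓝 0] fun h => ‖h‖ ^ 3 := by
  have hz : Tendsto (fun k : E => z + k) (𝓝 0) (𝓝 z) := by
    simpa using (continuous_const_add z).tendsto 0
  have hnear : ∀ᶠ k in 𝓝 (0 : E), ContDiffAt ℝ 3 f (z + k) :=
    hz.eventually (hf.eventually (by simp))
  have h2 : (fun k => fderiv ℝ (fderiv ℝ f) (z + k) - fderiv ℝ (fderiv ℝ f) z)
      =O[𝓝 0] fun k => ‖k‖ ^ 1 := by
    have := (((hf.fderiv_right (m := 2) (by norm_num)).fderiv_right (m := 1)
      (by norm_num)).differentiableAt (by norm_num)).isBigO_sub.comp_tendsto hz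
    simpa [Function.comp_def] using this.norm_right
  have h1 : (fun k => fderiv ℝ f (z + k) - fderiv ℝ f z - fderiv ℝ (fderiv ℝ f) z k)
      =O[𝓝 0] fun k => ‖k‖ ^ 2 := by
    refine isBigO_norm_pow_succ_of_hasFDerivAt (by simp) ?_ h2
    filter_upwards [hnear] with k hk
    have hd : HasFDerivAt (fun k => fderiv ℝ f (z + k)) (fderiv ℝ (fderiv ℝ f) (z + k)) k := by
      simpa [Function.comp_def] using ((hk.fderiv_right (m := 2) (by norm_num)).differentiableAt
        (by norm_num)).hasFDerivAt.comp k ((hasFDerivAt_id k).const_add z)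
    exact (hd.sub_const _).sub (fderiv ℝ (fderiv ℝ f) z).hasFDerivAt
  refine isBigO_norm_pow_succ_of_hasFDerivAt (by simp) ?_ h1
  have hsymm := hf.isSymmSndFDerivAt (by norm_num [minSmoothness_of_isRCLikeNormedField])
  filter_upwards [hnear] with k hk
  have hd : HasFDerivAt (fun k => f (z + k)) (fderiv ℝ f (z + k)) k := by
    simpa [Function.comp_def] using
      (hk.differentiableAt (by norm_num)).hasFDerivAt.comp k ((hasFDerivAt_id k).const_add z)
  have hq : HasFDerivAt (fun h => fderiv ℝ (fderiv ℝ f) z h h)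
      (fderiv ℝ (fderiv ℝ f) z k + fderiv ℝ (fderiv ℝ f) z k) k :=
    ((fderiv ℝ (fderiv ℝ f) z).hasFDerivAt.clm_apply (hasFDerivAt_id k)).congr_fderiv
      (by ext w; simp [hsymm k w])
  refine (((hd.sub_const (f z)).sub (fderiv ℝ f z).hasFDerivAt).sub
    (hq.const_smul (2 : ℝ)⁻¹)).congr_fderiv ?_
  rw [← two_smul ℝ, smul_smul]
  norm_num

theorem ContDiffAt.isLittleO_taylor_two_along {f : E → F} {z : E}
    (hf : ContDiffAt ℝ 3 f z) {A D : ℝ → E} {p : ℝ} (hp : 2 / 3 < p) (hp2 : p < 2)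
    (hA : A =O[𝓝[>] 0] (· ^ p)) (hD : D =O[𝓝[>] 0] (· ^ 2)) :
    (fun ε => f (z + (A ε + D ε)) - f z - fderiv ℝ f z (A ε + D ε)
        - (2 : ℝ)⁻¹ • fderiv ℝ (fderiv ℝ f) z (A ε) (A ε)) =o[𝓝[>] 0] (· ^ 2) := by
  simp only [← Real.rpow_two] at hD ⊢
  set B := fderiv ℝ (fderiv ℝ f) z
  have hAD : (fun ε => A ε + D ε) =O[𝓝[>] 0] (· ^ p) :=
    hA.add (hD.trans (isLittleO_rpow_nhdsGT_zero hp2).isBigO)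
  have hcube : (fun ε => ‖A ε + D ε‖ ^ 3) =o[𝓝[>] 0] (· ^ (2 : ℝ)) := by
    refine (hAD.norm_left.pow 3).trans_isLittleO
      ((isLittleO_rpow_nhdsGT_zero (by linarith : 2 < p * 3)).congr' ?_ .rfl)
    filter_upwards [self_mem_nhdsWithin] with x hx
    rw [Real.rpow_mul (le_of_lt hx)]
    norm_cast
  have hcross : (fun ε => B (A ε + D ε) (D ε) + B (D ε) (A ε)) =o[𝓝[>] 0] (· ^ (2 : ℝ)) := by
    have hprod : (fun ε : ℝ => ε ^ p * ε ^ (2 : ℝ)) =o[𝓝[>] 0] (· ^ (2 : ℝ)) := by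
      simpa using (isLittleO_rpow_nhdsGT_zero (by linarith : (0 : ℝ) < p)).mul_isBigO
        (isBigO_refl (· ^ (2 : ℝ)) _)
    refine .add ?_ ?_
    · exact B.isBoundedBilinearMap.isBigO_comp.trans_isLittleO
        ((hAD.norm_left.mul hD.norm_left).trans_isLittleO hprod)
    · refine B.isBoundedBilinearMap.isBigO_comp.trans_isLittleO
        ((hD.norm_left.mul hA.norm_left).trans_isLittleO ?_)
      simpa [mul_comm] using hprod
  refine ((hf.isBigO_taylor_two.comp_tendsto (hAD.trans_tendsto (tendsto_rpow_nhdsGT_zero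
    (by linarith))) |>.trans_isLittleO hcube).add (hcross.const_smul_left (2 : ℝ)⁻¹)).congr_left ?_
  intro ε
  simp only [Function.comp_apply, Pi.smul_apply, map_add, FunLike.coe_add, Pi.add_apply, smul_add]
  abel

end Taylor

section Slices

variable {E F G : Type*} [NormedAddCommGroup E] [NormedSpace ℝ E] [NormedAddCommGroup F]
  [NormedSpace ℝ F] [NormedAddCommGroup G] [NormedSpace ℝ G] {x : E} {t : F}

theorem HasFDerivAt.comp_prodMk_left {φ : E × F → G} {φ' : E × F →L[ℝ] G}
    (h : HasFDerivAt φ φ' (x, t)) :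
    HasFDerivAt (fun y => φ (y, t)) (φ'.comp (ContinuousLinearMap.inl ℝ E F)) x :=
  h.comp x (hasFDerivAt_prodMk_left x t)

theorem fderiv_fderiv_comp_prodMk_left {ψ : E × F → G} (hψ : ContDiffAt ℝ 2 ψ (x, t))
    (w w' : E) :
    fderiv ℝ (fderiv ℝ fun y => ψ (y, t)) x w w' =
      fderiv ℝ (fderiv ℝ ψ) (x, t) (w, 0) (w', 0) := by
  have hslice : Tendsto (fun y : E => (y, t)) (𝓝 x) (𝓝 (x, t)) :=
    (continuous_id.prodMk continuous_const).tendsto x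
  have hfd : fderiv ℝ (fun y => ψ (y, t)) =ᶠ[𝓝 x]
      fun y => (fderiv ℝ ψ (y, t)).comp (ContinuousLinearMap.inl ℝ E F) := by
    filter_upwards [hslice.eventually (hψ.eventually (by simp))] with y hy
    exact (hy.differentiableAt (by norm_num)).hasFDerivAt.comp_prodMk_left.fderiv
  have hd := ((hψ.fderiv_right (m := 1) (by norm_num)).differentiableAt
    (by norm_num)).hasFDerivAt.comp_prodMk_left
  rw [hfd.fderiv_eq, (hd.clm_comp (hasFDerivAt_const _ x)).fderiv]
  simp

end Slices

section Gradient

variable {E : Type*} [NormedAddCommGroup E] [InnerProductSpace ℝ E] [CompleteSpace E]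

theorem inner_fderiv_gradient (g : E → ℝ) (x w w' : E) :
    ⟪fderiv ℝ (gradient g) x w, w'⟫ = fderiv ℝ (fderiv ℝ g) x w w' := by
  let T : StrongDual ℝ E ≃L[ℝ] E := (InnerProductSpace.toDual ℝ E).symm.toContinuousLinearEquiv
  rw [show gradient g = T ∘ fderiv ℝ g from rfl, T.comp_fderiv]
  exact InnerProductSpace.toDual_symm_apply

theorem fderiv_apply_eq_inner_gradient_add {ψ : E × ℝ → ℝ} {x : E} {t : ℝ}
    (hψ : DifferentiableAt ℝ ψ (x, t)) (w : E) (τ : ℝ) :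
    fderiv ℝ ψ (x, t) (w, τ) =
      ⟪gradient (fun y => ψ (y, t)) x, w⟫ + τ * deriv (fun τ => ψ (x, τ)) t := by
  have hx := hψ.hasFDerivAt.comp_prodMk_left.fderiv
  have ht : deriv (fun τ => ψ (x, τ)) t = fderiv ℝ ψ (x, t) (0, 1) :=
    (hψ.hasFDerivAt.comp_hasDerivAt t ((hasDerivAt_const t x).prodMk (hasDerivAt_id t))).deriv
  rw [gradient, InnerProductSpace.toDual_symm_apply, hx, ht,
    show ((w, τ) : E × ℝ) = (w, 0) + τ • (0, 1) by simp, map_add, map_smul, smul_eq_mul]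
  rfl

end Gradient

theorem isBigO_one_of_eq_one_or_eq_neg_one {b : ℝ → ℝ}
    (hb : ∀ ε ∈ Ioo (0 : ℝ) 1, b ε = 1 ∨ b ε = -1) : b =O[𝓝[>] 0] fun _ => (1 : ℝ) := by
  refine .of_bound 1 ?_
  filter_upwards [Ioo_mem_nhdsGT one_pos] with ε hε
  rcases hb ε hε with h | h <;> simp [h]

theorem isBigO_mul_rpow_of_le_rpow_neg {s : ℝ → ℝ} {α : ℝ}
    (hs : ∀ᶠ ε in 𝓝[>] 0, 0 ≤ s ε ∧ s ε ≤ ε ^ (-α)) :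
    (fun ε => ε * s ε) =O[𝓝[>] 0] (· ^ (1 - α)) := by
  refine .of_bound 1 ?_
  filter_upwards [hs, self_mem_nhdsWithin] with ε ⟨hs0, hsα⟩ hε
  rw [one_mul, Real.norm_of_nonneg (mul_nonneg (le_of_lt hε) hs0),
    Real.norm_of_nonneg (Real.rpow_nonneg (le_of_lt hε) _), sub_eq_add_neg,
    Real.rpow_add hε, Real.rpow_one]
  exact mul_le_mul_of_nonneg_left hsα (le_of_lt hε)

theorem isBigO_one_comp_of_eq_mul_rpow {α : Type*} {l : Filter α} {f : ℝ → ℝ} {c e δ : ℝ}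
    (hf : ∀ s : ℝ, 0 < s → f s = c * s ^ e) (he : e ≤ 0) (hδ : 0 < δ) {s : α → ℝ}
    (hs : ∀ᶠ x in l, δ ≤ s x) : (fun x => f (s x)) =O[l] fun _ => (1 : ℝ) := by
  refine .of_bound (|c| * δ ^ e) ?_
  filter_upwards [hs] with x hδs
  rw [hf _ (hδ.trans_le hδs), norm_one, mul_one, Real.norm_eq_abs, abs_mul,
    abs_of_nonneg (Real.rpow_nonneg (hδ.le.trans hδs) _)]
  exact mul_le_mul_of_nonneg_left (Real.rpow_le_rpow_of_nonpos hδ hδs he) (abs_nonneg c)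

theorem statement_5_general (γ cγ α₂ δ : ℝ) (hγ₁ : 1/3 < γ) (hγ₂ : γ < 1)
    (f : ℝ → ℝ) (hf : ∀ s : ℝ, 0 < s → f s = cγ * s ^ (2*γ/(γ-1)))
    (hα₂ : 0 < α₂) (hα₂' : α₂ < 1/3) (hδ : 0 < δ)
    (ψ : E2 × ℝ → ℝ) (x₀ : E2) (t₀ : ℝ)
    (U : Set (E2 × ℝ)) (hU : U ∈ 𝓝 (x₀, t₀)) (hψ : ContDiffOn ℝ 3 ψ U)
    (v : E2)
    (b β s : ℝ → ℝ)
    (hb : ∀ ε ∈ Ioo (0:ℝ) 1, b ε = 1 ∨ b ε = -1)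
    (hβ : ∀ ε ∈ Ioo (0:ℝ) 1, β ε = 1 ∨ β ε = -1)
    (hs : ∀ ε ∈ Ioo (0:ℝ) 1, s ε ∈ Icc δ (ε ^ (-α₂))) :
    (fun ε : ℝ =>
        ψ (x₀ + (b ε * ε * s ε) • perp v + (β ε * ε^2 * f (s ε)) • v, t₀ + ε^2)
          - ψ (x₀, t₀)
          - ε * b ε * s ε * ⟪gradient (fun y => ψ (y, t₀)) x₀, perp v⟫
          - ε^2 * (deriv (fun τ => ψ (x₀, τ)) t₀
              + β ε * f (s ε) * ⟪gradient (fun y => ψ (y, t₀)) x₀, v⟫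
              + s ε ^ 2 / 2 *
                ⟪fderiv ℝ (fun y => gradient (fun z => ψ (z, t₀)) y) x₀ (perp v), perp v⟫))
      =o[𝓝[>] (0:ℝ)] (fun ε => ε^2) := by
  have hIoo : ∀ᶠ ε in 𝓝[>] (0 : ℝ), ε ∈ Ioo (0 : ℝ) 1 := Ioo_mem_nhdsGT one_pos
  have hψz : ContDiffAt ℝ 3 ψ (x₀, t₀) := hψ.contDiffAt hU
  have hs' : ∀ᶠ ε in 𝓝[>] (0 : ℝ), δ ≤ s ε ∧ s ε ≤ ε ^ (-α₂) := hIoo.mono hs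
  have hfs := isBigO_one_comp_of_eq_mul_rpow hf
    (div_nonpos_of_nonneg_of_nonpos (by linarith) (by linarith)) hδ (hs'.mono fun _ => And.left)
  have hA : (fun ε => ((b ε * ε * s ε) • perp v, (0 : ℝ))) =O[𝓝[>] 0] (· ^ (1 - α₂)) := by
    refine .prod_left (.smul_const ?_ _) (isBigO_zero _ _)
    simpa [mul_assoc] using (isBigO_one_of_eq_one_or_eq_neg_one hb).mul
      (isBigO_mul_rpow_of_le_rpow_neg (hs'.mono fun _ h => ⟨hδ.le.trans h.1, h.2⟩))
  have hD : (fun ε => ((β ε * ε ^ 2 * f (s ε)) • v, ε ^ 2)) =O[𝓝[>] 0] (· ^ 2) :=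
    .prod_left (.smul_const (by simpa using ((isBigO_one_of_eq_one_or_eq_neg_one hβ).mul
      (isBigO_refl (· ^ 2) _)).mul hfs) _) (isBigO_refl _ _)
  refine (hψz.isLittleO_taylor_two_along (by linarith) (by linarith) hA hD).congr' ?_ .rfl
  filter_upwards [hIoo] with ε hε
  have hb2 : b ε ^ 2 = 1 := by rcases hb ε hε with h | h <;> simp [h]
  rw [show ((b ε * ε * s ε) • perp v, (0 : ℝ)) = (b ε * ε * s ε) • ((perp v, 0) : E2 × ℝ) by simp,
    inner_fderiv_gradient, fderiv_fderiv_comp_prodMk_left (hψz.of_le (by norm_num))]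
  simp only [map_add, map_smul, smul_apply, smul_eq_mul]
  simp only [fderiv_apply_eq_inner_gradient_add (hψz.differentiableAt (by norm_num)),
    Prod.smul_mk, smul_zero, Prod.mk_add_mk, add_assoc, zero_add, inner_smul_right]
  linear_combination (-(ε ^ 2 * s ε ^ 2) / 2 *
    fderiv ℝ (fderiv ℝ ψ) (x₀, t₀) (perp v, 0) (perp v, 0)) * hb2

/-- one-step Taylor expansion of a `C³` test function along a move of the
curvature game: the expansion error is `o(ε²)` as `ε → 0⁺`. -/
theorem statement_5 (γ cγ α₂ δ : ℝ) (hγ₁ : 1/3 < γ) (hγ₂ : γ < 1)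
    (hcγ : cγ = (1 - γ) * (2*γ) ^ (γ/(1-γ)))
    (f : ℝ → ℝ) (hf : ∀ s : ℝ, 0 < s → f s = cγ * s ^ (2*γ/(γ-1)))
    (hα₂ : 0 < α₂) (hα₂' : α₂ < 1/3) (hδ : 0 < δ)
    (ψ : E2 × ℝ → ℝ) (x₀ : E2) (t₀ : ℝ)
    (U : Set (E2 × ℝ)) (hU : U ∈ 𝓝 (x₀, t₀)) (hψ : ContDiffOn ℝ 3 ψ U)
    (v : E2) (hv : ‖v‖ = 1)
    (b β s : ℝ → ℝ)
    (hb : ∀ ε ∈ Ioo (0:ℝ) 1, b ε = 1 ∨ b ε = -1)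
    (hβ : ∀ ε ∈ Ioo (0:ℝ) 1, β ε = 1 ∨ β ε = -1)
    (hs : ∀ ε ∈ Ioo (0:ℝ) 1, s ε ∈ Icc δ (ε ^ (-α₂))) :
    (fun ε : ℝ =>
        ψ (x₀ + (b ε * ε * s ε) • perp v + (β ε * ε^2 * f (s ε)) • v, t₀ + ε^2)
          - ψ (x₀, t₀)
          - ε * b ε * s ε * ⟪gradient (fun y => ψ (y, t₀)) x₀, perp v⟫
          - ε^2 * (deriv (fun τ => ψ (x₀, τ)) t₀
              + β ε * f (s ε) * ⟪gradient (fun y => ψ (y, t₀)) x₀, v⟫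
              + s ε ^ 2 / 2 *
                ⟪fderiv ℝ (fun y => gradient (fun z => ψ (z, t₀)) y) x₀ (perp v), perp v⟫))
      =o[𝓝[>] (0:ℝ)] (fun ε => ε^2) :=
  statement_5_general γ cγ α₂ δ hγ₁ hγ₂ f hf hα₂ hα₂' hδ ψ x₀ t₀ U hU hψ v b β s hb hβ hs
end
end

section
/- Let 1/3 < γ < 1, c_γ = (1−γ)·(2γ)^{γ/(1−γ)}, f(s) = c_γ·s^{2γ/(γ−1)}, φ_s(κ) = κ·s²/2 − f(s), and let α₁, α₂ > 0. For all real a ≤ b < 0 there exists ε₀ > 0 such that for every ε ∈ (0, ε₀) and every κ ∈ [a, b], the maximum of s ↦ φ_s(κ) over the interval I_ε = [ε^{α₁}, ε^{−α₂}] is attained and equals −|κ|^γ. -/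
/-!
With `κ = -k < 0` and `t = s²`, `-φ_s(κ) = k t / 2 + c_γ t^{γ/(γ-1)}`. Weighted AM–GM with
weights `γ, 1 - γ`, applied to `k t / (2γ)` and `(2γ)^{γ/(1-γ)} t^{γ/(γ-1)}` (whose weighted
geometric mean is `k^γ`), bounds this below by `k^γ`, with equality at `t = 2γ k^{γ-1}`. This
optimal `s` decreases in `k`, so for `κ ∈ [a, b]` it stays in a fixed compact subinterval of
`(0, ∞)`, which `I_ε` contains once `ε` is small.
-/

open Set Real

/-- The constant `c_γ`. -/
noncomputable def powerConst (γ : ℝ) : ℝ := (1 - γ) * (2 * γ) ^ (γ / (1 - γ))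

lemma rpow_le_linear_add_powerConst_mul_rpow {γ k t : ℝ} (hγ₀ : 0 < γ) (hγ₁ : γ < 1)
    (hk : 0 < k) (ht : 0 < t) :
    k ^ γ ≤ k * t / 2 + powerConst γ * t ^ (γ / (γ - 1)) := by
  have h2γ : 0 < 2 * γ := by linarith
  have h1γ : 1 - γ ≠ 0 := by linarith
  have hγ1 : γ - 1 ≠ 0 := by linarith
  set p₁ := k * t / (2 * γ)
  set p₂ := (2 * γ) ^ (γ / (1 - γ)) * t ^ (γ / (γ - 1))
  have hp₁ : p₁ ^ γ = (k / (2 * γ)) ^ γ * t ^ γ := by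
    rw [show p₁ = k / (2 * γ) * t by ring, mul_rpow (by positivity) ht.le]
  have hp₂ : p₂ ^ (1 - γ) = (2 * γ) ^ γ * t ^ (-γ) := by
    rw [mul_rpow (by positivity) (by positivity), ← rpow_mul h2γ.le, ← rpow_mul ht.le,
      div_mul_cancel₀ _ h1γ, show γ / (γ - 1) * (1 - γ) = -γ by field_simp; ring]
  have hprod : p₁ ^ γ * p₂ ^ (1 - γ) = k ^ γ := by
    rw [hp₁, hp₂, show (k / (2 * γ)) ^ γ * t ^ γ * ((2 * γ) ^ γ * t ^ (-γ))
        = ((k / (2 * γ)) ^ γ * (2 * γ) ^ γ) * (t ^ γ * t ^ (-γ)) by ring,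
      ← mul_rpow (by positivity) h2γ.le, ← rpow_add ht, div_mul_cancel₀ k h2γ.ne']
    simp
  have hsum : γ * p₁ + (1 - γ) * p₂ = k * t / 2 + powerConst γ * t ^ (γ / (γ - 1)) := by
    unfold powerConst p₁ p₂
    field_simp
  rw [← hprod, ← hsum]
  exact geom_mean_le_arith_mean2_weighted hγ₀.le (by linarith) (by positivity) (by positivity)
    (by ring)

lemma linear_add_powerConst_mul_rpow_eq {γ k : ℝ} (hγ₀ : 0 < γ) (hγ₁ : γ ≠ 1) (hk : 0 < k) :
    k * (2 * γ * k ^ (γ - 1)) / 2 + powerConst γ * (2 * γ * k ^ (γ - 1)) ^ (γ / (γ - 1))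
      = k ^ γ := by
  have h2γ : 0 < 2 * γ := by linarith
  have hγ1 : γ - 1 ≠ 0 := sub_ne_zero.mpr hγ₁
  have hlin : k * k ^ (γ - 1) = k ^ γ := by
    rw [← rpow_one_add' hk.le (by simpa using hγ₀.ne')]; ring_nf
  have hpow : (2 * γ * k ^ (γ - 1)) ^ (γ / (γ - 1)) = (2 * γ) ^ (γ / (γ - 1)) * k ^ γ := by
    rw [mul_rpow h2γ.le (by positivity), ← rpow_mul hk.le, mul_div_cancel₀ γ hγ1]
  have hconst : (2 * γ) ^ (γ / (1 - γ)) * (2 * γ) ^ (γ / (γ - 1)) = 1 := by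
    rw [← rpow_add h2γ, show γ / (1 - γ) + γ / (γ - 1) = 0 by
      rw [← neg_sub γ 1, div_neg]; ring, rpow_zero]
  rw [hpow, powerConst]
  linear_combination γ * hlin + (1 - γ) * k ^ γ * hconst

lemma exists_rpow_le_and_le_rpow_neg {m M α₁ α₂ : ℝ} (hm : 0 < m) (hM : 0 < M)
    (hα₁ : 0 < α₁) (hα₂ : 0 < α₂) :
    ∃ ε₀ > 0, ∀ ε, 0 < ε → ε < ε₀ → ε ^ α₁ ≤ m ∧ M ≤ ε ^ (-α₂) := by
  refine ⟨min (m ^ α₁⁻¹) (M ^ (-α₂)⁻¹), by positivity, fun ε hε hεε₀ => ⟨?_, ?_⟩⟩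
  · calc ε ^ α₁ ≤ (m ^ α₁⁻¹) ^ α₁ :=
          rpow_le_rpow hε.le (hεε₀.le.trans (min_le_left _ _)) hα₁.le
      _ = m := rpow_inv_rpow hm.le hα₁.ne'
  · calc M = (M ^ (-α₂)⁻¹) ^ (-α₂) := (rpow_inv_rpow hM.le (neg_ne_zero.mpr hα₂.ne')).symm
      _ ≤ ε ^ (-α₂) :=
          rpow_le_rpow_of_nonpos hε (hεε₀.le.trans (min_le_right _ _)) (by linarith)

lemma rpow_two_mul_div {s x y : ℝ} (hs : 0 ≤ s) : s ^ (2 * x / y) = (s ^ 2) ^ (x / y) := by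
  rw [mul_div_assoc, ← rpow_natCast_mul hs]
  norm_num

/-- For all `a ≤ b < 0` there exists `ε₀ > 0` such that for every
`ε ∈ (0, ε₀)` and every `κ ∈ [a, b]`, the maximum of `s ↦ φ_s(κ)` over
`I_ε = [ε^{α₁}, ε^{−α₂}]` is attained and equals `−|κ|^γ`. -/
theorem statement_6 (γ cγ α₁ α₂ : ℝ) (hγ₁ : 1/3 < γ) (hγ₂ : γ < 1)
    (hcγ : cγ = (1 - γ) * (2*γ) ^ (γ/(1-γ)))
    (f : ℝ → ℝ) (hf : ∀ s : ℝ, 0 < s → f s = cγ * s ^ (2*γ/(γ-1)))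
    (φ : ℝ → ℝ → ℝ) (hφ : ∀ s κ : ℝ, φ s κ = κ * s^2 / 2 - f s)
    (hα₁ : 0 < α₁) (hα₂ : 0 < α₂)
    (a b : ℝ) (hab : a ≤ b) (hb : b < 0) :
    ∃ ε₀ > (0:ℝ), ∀ ε : ℝ, 0 < ε → ε < ε₀ → ∀ κ ∈ Icc a b,
      ∃ s ∈ Icc (ε ^ α₁) (ε ^ (-α₂)),
        (∀ s' ∈ Icc (ε ^ α₁) (ε ^ (-α₂)), φ s' κ ≤ φ s κ) ∧
        φ s κ = -|κ| ^ γ := by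
  have hγ₀ : 0 < γ := by linarith
  set t₀ : ℝ → ℝ := fun k => 2 * γ * k ^ (γ - 1)
  have ht₀ : AntitoneOn t₀ (Ioi 0) := fun x hx y _ hxy =>
    mul_le_mul_of_nonneg_left (rpow_le_rpow_of_nonpos hx hxy (by linarith)) (by linarith)
  have ht₀_pos : ∀ k, 0 < k → 0 < t₀ k := fun k hk => mul_pos (by linarith) (rpow_pos_of_pos hk _)
  obtain ⟨ε₀, hε₀, hI⟩ := exists_rpow_le_and_le_rpow_neg (m := √(t₀ (-a))) (M := √(t₀ (-b)))
    (sqrt_pos.mpr (ht₀_pos _ (by linarith))) (sqrt_pos.mpr (ht₀_pos _ (by linarith))) hα₁ hα₂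
  refine ⟨ε₀, hε₀, fun ε hε hεε₀ κ ⟨haκ, hκb⟩ => ?_⟩
  have hκ : 0 < -κ := by linarith
  have hφ' : ∀ s > 0, φ s κ = -(-κ * s ^ 2 / 2 + powerConst γ * (s ^ 2) ^ (γ / (γ - 1))) := by
    intro s hs
    rw [hφ, hf s hs, hcγ, rpow_two_mul_div hs.le, powerConst]
    ring
  have hopt : φ √(t₀ (-κ)) κ = -|κ| ^ γ := by
    rw [hφ' _ (sqrt_pos.mpr (ht₀_pos _ hκ)), sq_sqrt (ht₀_pos _ hκ).le,
      linear_add_powerConst_mul_rpow_eq hγ₀ hγ₂.ne hκ, abs_of_neg (neg_pos.mp hκ)]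
  obtain ⟨hlow, hhigh⟩ := hI ε hε hεε₀
  refine ⟨√(t₀ (-κ)), ⟨hlow.trans (sqrt_le_sqrt (ht₀ hκ (show 0 < -a by linarith) (by linarith))),
    (sqrt_le_sqrt (ht₀ (show 0 < -b by linarith) hκ (by linarith))).trans hhigh⟩, fun s hs => ?_, hopt⟩
  have hs : 0 < s := (rpow_pos_of_pos hε _).trans_le hs.1
  rw [hopt, hφ' s hs, abs_of_neg (neg_pos.mp hκ)]
  exact neg_le_neg (rpow_le_linear_add_powerConst_mul_rpow hγ₀ hγ₂ hκ (by positivity))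
end

section
/- Let 1/3 < γ < 1, c_γ = (1−γ)·(2γ)^{γ/(1−γ)}, f(s) = c_γ·s^{2γ/(γ−1)}, φ_s(κ) = κ·s²/2 − f(s), let Φ(κ) = −|κ|^γ for κ ≤ 0 and Φ(κ) = 0 for κ > 0, and suppose α₁, α₂ satisfy (1−γ)/(2γ) < α₁ < min(1, (1−γ)/γ) and 0 < α₂ < min(2γα₁/(1−γ) − 1, 1/3). Then for every κ ∈ ℝ, inf_{s ∈ I_ε} |φ_s(κ) − Φ(κ)| → 0 as ε → 0⁺, where I_ε = [ε^{α₁}, ε^{−α₂}]; moreover, for every κ ≤ 0 and every s > 0 one has φ_s(κ) ≤ Φ(κ). -/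
open Set Filter
open scoped Topology

/-!
Weighted AM–GM with weights `γ, 1 - γ` gives `|κ|^γ ≤ |κ| s²/2 + c_γ s^{2γ/(γ-1)}` for all
`s > 0`, i.e. `φ_s(κ) ≤ Φ(κ)` for `κ ≤ 0`, with equality at `s² = 2γ |κ|^{γ-1}`. For `κ > 0`,
`φ_s(κ) = 0 = Φ(κ)` at `s^{2/(1-γ)} = 2c_γ/κ`. So for `κ ≠ 0` a fixed `s` with `φ_s(κ) = Φ(κ)`
lies in `I_ε` for small `ε` and the infimum is eventually `0`; for `κ = 0` we evaluate at the
right endpoint, where `|φ_s(0) - Φ(0)| = f(ε^{-α₂}) → 0`.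
-/

namespace Real

theorem rpow_le_mul_sq_div_two_add_rpow {γ t s : ℝ} (hγ₀ : 0 < γ) (hγ₁ : γ < 1) (ht : 0 ≤ t)
    (hs : 0 < s) :
    t ^ γ ≤ t * s ^ 2 / 2 + (1 - γ) * (2 * γ) ^ (γ / (1 - γ)) * s ^ (2 * γ / (γ - 1)) := by
  have h1γ : 0 < 1 - γ := by linarith
  set a := t * s ^ 2 / (2 * γ)
  set b := (2 * γ) ^ (γ / (1 - γ)) * s ^ (2 * γ / (γ - 1))
  have ha : a ^ γ = t ^ γ * s ^ (2 * γ) / (2 * γ) ^ γ := by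
    rw [div_rpow (by positivity) (by positivity), mul_rpow ht (by positivity),
      ← rpow_natCast s 2, ← rpow_mul hs.le]
    norm_num [mul_comm]
  have hb : b ^ (1 - γ) = (2 * γ) ^ γ * s ^ (-(2 * γ)) := by
    rw [mul_rpow (by positivity) (by positivity), ← rpow_mul (by positivity),
      ← rpow_mul hs.le]
    congr 2 <;> field_simp [h1γ.ne', sub_ne_zero.2 hγ₁.ne]
    ring
  have hab : a ^ γ * b ^ (1 - γ) = t ^ γ := by
    rw [ha, hb, rpow_neg hs.le]
    field_simp
  calc t ^ γ = a ^ γ * b ^ (1 - γ) := hab.symm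
    _ ≤ γ * a + (1 - γ) * b :=
      geom_mean_le_arith_mean2_weighted hγ₀.le h1γ.le (by positivity) (by positivity) (by ring)
    _ = _ := by simp only [a, b]; field_simp

theorem exists_mul_sq_div_two_add_rpow_eq {γ t : ℝ} (hγ₀ : 0 < γ) (hγ₁ : γ < 1) (ht : 0 < t) :
    ∃ s > 0,
      t * s ^ 2 / 2 + (1 - γ) * (2 * γ) ^ (γ / (1 - γ)) * s ^ (2 * γ / (γ - 1)) = t ^ γ := by
  set x := 2 * γ * t ^ (γ - 1) with hx_def
  have hx : 0 < x := by positivity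
  refine ⟨√x, sqrt_pos.2 hx, ?_⟩
  have hsq : t * √x ^ 2 / 2 = γ * t ^ γ := by
    rw [sq_sqrt hx.le, hx_def, rpow_sub_one ht.ne']
    field_simp
  have hpow : √x ^ (2 * γ / (γ - 1)) = (2 * γ) ^ (γ / (γ - 1)) * t ^ γ := by
    rw [sqrt_eq_rpow, ← rpow_mul hx.le, mul_rpow (by positivity) (by positivity),
      ← rpow_mul ht.le]
    congr 2 <;> field_simp [sub_ne_zero.2 hγ₁.ne]
  have hcancel : (2 * γ) ^ (γ / (1 - γ)) * (2 * γ) ^ (γ / (γ - 1)) = 1 := by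
    rw [← rpow_add (by positivity), ← neg_sub γ 1, div_neg, neg_add_cancel, rpow_zero]
  rw [hsq, hpow]
  linear_combination (1 - γ) * t ^ γ * hcancel

theorem exists_mul_sq_div_two_eq_mul_rpow {κ c p : ℝ} (hκ : 0 < κ) (hc : 0 < c) (hp : p ≠ 2) :
    ∃ s > 0, κ * s ^ 2 / 2 = c * s ^ p := by
  set s := (2 * c / κ) ^ (2 - p)⁻¹
  have hs : 0 < s := by positivity
  refine ⟨s, hs, ?_⟩
  have h : s ^ (2 - p) = 2 * c / κ := by
    rw [← rpow_mul (by positivity), inv_mul_cancel₀ (sub_ne_zero.2 hp.symm), rpow_one]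
  have h2 : s ^ 2 = s ^ (2 - p) * s ^ p := by
    rw [← rpow_add hs, sub_add_cancel, ← rpow_natCast]; norm_num
  rw [h2, h]
  field_simp

end Real

theorem tendsto_sInf_image_of_eventually_mem {α ι : Type*} {l : Filter ι} {I : ι → Set α}
    {h : α → ℝ} (hh : ∀ a, 0 ≤ h a) (σ : ι → α) (hσ : ∀ᶠ i in l, σ i ∈ I i)
    (hlim : Tendsto (h ∘ σ) l (𝓝 0)) :
    Tendsto (fun i => sInf (h '' I i)) l (𝓝 0) := by
  have hbdd : ∀ i, BddBelow (h '' I i) := fun i => ⟨0, by rintro _ ⟨a, -, rfl⟩; exact hh a⟩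
  refine tendsto_of_tendsto_of_tendsto_of_le_of_le' tendsto_const_nhds hlim
    (Eventually.of_forall fun i => Real.sInf_nonneg ?_) ?_
  · rintro _ ⟨a, -, rfl⟩
    exact hh a
  · filter_upwards [hσ] with i hi
    exact csInf_le (hbdd i) (mem_image_of_mem h hi)

theorem tendsto_sInf_image_Icc_rpow_of_eq_zero {α₁ α₂ s₀ : ℝ} {h : ℝ → ℝ} (hh : ∀ s, 0 ≤ h s)
    (hα₁ : 0 < α₁) (hα₂ : 0 < α₂) (hs₀ : 0 < s₀) (hzero : h s₀ = 0) :
    Tendsto (fun ε : ℝ => sInf (h '' Icc (ε ^ α₁) (ε ^ (-α₂)))) (𝓝[>] 0) (𝓝 0) := by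
  have hlow : Tendsto (fun ε : ℝ => ε ^ α₁) (𝓝[>] 0) (𝓝 0) := by
    simpa [Real.zero_rpow hα₁.ne'] using
      (Real.continuousAt_rpow_const 0 α₁ (Or.inr hα₁.le)).tendsto.mono_left nhdsWithin_le_nhds
  refine tendsto_sInf_image_of_eventually_mem hh (fun _ => s₀) ?_
    (by simp [Function.comp_def, hzero])
  filter_upwards [hlow.eventually_le_const hs₀,
    (tendsto_rpow_neg_nhdsGT_zero (neg_neg_of_pos hα₂)).eventually_ge_atTop s₀] with ε h₁ h₂
  exact ⟨h₁, h₂⟩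

theorem tendsto_sInf_image_Icc_rpow_of_tendsto_atTop {α₁ α₂ : ℝ} {h : ℝ → ℝ}
    (hh : ∀ s, 0 ≤ h s) (hα₂ : 0 < α₂) (hα : -α₂ ≤ α₁) (hlim : Tendsto h atTop (𝓝 0)) :
    Tendsto (fun ε : ℝ => sInf (h '' Icc (ε ^ α₁) (ε ^ (-α₂)))) (𝓝[>] 0) (𝓝 0) := by
  refine tendsto_sInf_image_of_eventually_mem hh (fun ε => ε ^ (-α₂)) ?_
    (hlim.comp (tendsto_rpow_neg_nhdsGT_zero (neg_neg_of_pos hα₂)))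
  filter_upwards [Ioc_mem_nhdsGT one_pos] with ε ⟨hε₀, hε₁⟩
  exact ⟨Real.rpow_le_rpow_of_exponent_ge hε₀ hε₁ hα, le_rfl⟩

theorem statement_8_general (γ cγ α₁ α₂ : ℝ) (hγ₁ : 1/3 < γ) (hγ₂ : γ < 1)
    (hcγ : cγ = (1 - γ) * (2*γ) ^ (γ/(1-γ)))
    (f : ℝ → ℝ) (hf : ∀ s : ℝ, 0 < s → f s = cγ * s ^ (2*γ/(γ-1)))
    (φ : ℝ → ℝ → ℝ) (hφ : ∀ s κ : ℝ, φ s κ = κ * s^2 / 2 - f s)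
    (Φ : ℝ → ℝ) (hΦ₁ : ∀ κ : ℝ, κ ≤ 0 → Φ κ = -|κ| ^ γ) (hΦ₂ : ∀ κ : ℝ, 0 < κ → Φ κ = 0)
    (hα₁ : (1-γ)/(2*γ) < α₁)
    (hα₂ : 0 < α₂) :
    (∀ κ : ℝ, Tendsto
        (fun ε : ℝ => sInf ((fun s => |φ s κ - Φ κ|) '' Icc (ε ^ α₁) (ε ^ (-α₂))))
        (𝓝[>] (0:ℝ)) (𝓝 0)) ∧
    ∀ κ : ℝ, κ ≤ 0 → ∀ s : ℝ, 0 < s → φ s κ ≤ Φ κ := by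
  have hγ₀ : 0 < γ := by linarith
  have h1γ : 0 < 1 - γ := by linarith
  have hα₁₀ : 0 < α₁ := lt_trans (by positivity) hα₁
  have hcγ₀ : 0 < cγ := by rw [hcγ]; positivity
  have hp : 2*γ/(γ-1) < 0 := div_neg_of_pos_of_neg (by positivity) (by linarith)
  have hφf : ∀ κ s, 0 < s → φ s κ = κ * s ^ 2 / 2 - cγ * s ^ (2*γ/(γ-1)) := fun κ s hs => by
    rw [hφ, hf s hs]
  refine ⟨fun κ => ?_, fun κ hκ s hs => ?_⟩
  · rcases lt_trichotomy κ 0 with hκ | rfl | hκ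
    · obtain ⟨s₀, hs₀, h⟩ := Real.exists_mul_sq_div_two_add_rpow_eq hγ₀ hγ₂ (neg_pos.2 hκ)
      refine tendsto_sInf_image_Icc_rpow_of_eq_zero (fun _ => abs_nonneg _) hα₁₀ hα₂ hs₀
        (abs_eq_zero.2 <| sub_eq_zero.2 ?_)
      rw [hφf κ s₀ hs₀, hΦ₁ κ hκ.le, abs_of_neg hκ, ← h, hcγ]
      ring
    · refine tendsto_sInf_image_Icc_rpow_of_tendsto_atTop (fun _ => abs_nonneg _) hα₂
        (by linarith) ?_
      have hdecay := (tendsto_rpow_neg_atTop (neg_pos.2 hp)).const_mul cγ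
      rw [neg_neg, mul_zero] at hdecay
      refine hdecay.congr' ?_
      filter_upwards [eventually_gt_atTop 0] with s hs
      rw [hφf 0 s hs, hΦ₁ 0 le_rfl, abs_zero, Real.zero_rpow hγ₀.ne', zero_mul, zero_div,
        zero_sub, neg_zero, sub_zero, abs_neg, abs_of_pos (by positivity)]
    · obtain ⟨s₀, hs₀, h⟩ := Real.exists_mul_sq_div_two_eq_mul_rpow hκ hcγ₀ (hp.trans two_pos).ne
      exact tendsto_sInf_image_Icc_rpow_of_eq_zero (fun _ => abs_nonneg _) hα₁₀ hα₂ hs₀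
        (by rw [hφf κ s₀ hs₀, hΦ₂ κ hκ, h, sub_self, sub_zero, abs_zero])
  · rw [hφf κ s hs, hΦ₁ κ hκ, abs_of_nonpos hκ, hcγ]
    linarith [Real.rpow_le_mul_sq_div_two_add_rpow hγ₀ hγ₂ (neg_nonneg.2 hκ) hs]

/-- With `Φ(κ) = −|κ|^γ` for `κ ≤ 0` and `Φ(κ) = 0` for `κ > 0`, and α₁, α₂
satisfying the parameter conditions of the curvature game, for every `κ ∈ ℝ` we have
`inf_{s ∈ I_ε} |φ_s(κ) − Φ(κ)| → 0` as `ε → 0⁺`; moreover for every `κ ≤ 0` and every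
`s > 0` one has `φ_s(κ) ≤ Φ(κ)`. -/
theorem statement_8 (γ cγ α₁ α₂ : ℝ) (hγ₁ : 1/3 < γ) (hγ₂ : γ < 1)
    (hcγ : cγ = (1 - γ) * (2*γ) ^ (γ/(1-γ)))
    (f : ℝ → ℝ) (hf : ∀ s : ℝ, 0 < s → f s = cγ * s ^ (2*γ/(γ-1)))
    (φ : ℝ → ℝ → ℝ) (hφ : ∀ s κ : ℝ, φ s κ = κ * s^2 / 2 - f s)
    (Φ : ℝ → ℝ) (hΦ₁ : ∀ κ : ℝ, κ ≤ 0 → Φ κ = -|κ| ^ γ) (hΦ₂ : ∀ κ : ℝ, 0 < κ → Φ κ = 0)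
    (hα₁ : (1-γ)/(2*γ) < α₁) (hα₁' : α₁ < min 1 ((1-γ)/γ))
    (hα₂ : 0 < α₂) (hα₂' : α₂ < min (2*γ*α₁/(1-γ) - 1) (1/3)) :
    (∀ κ : ℝ, Tendsto
        (fun ε : ℝ => sInf ((fun s => |φ s κ - Φ κ|) '' Icc (ε ^ α₁) (ε ^ (-α₂))))
        (𝓝[>] (0:ℝ)) (𝓝 0)) ∧
    ∀ κ : ℝ, κ ≤ 0 → ∀ s : ℝ, 0 < s → φ s κ ≤ Φ κ :=
  statement_8_general γ cγ α₁ α₂ hγ₁ hγ₂ hcγ f hf φ hφ Φ hΦ₁ hΦ₂ hα₁ hα₂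
end

section
/- Let 1/3 < γ < 1, c_γ = (1−γ)·(2γ)^{γ/(1−γ)}, let α₁, α₂ satisfy (1−γ)/(2γ) < α₁ < min(1, (1−γ)/γ) and 0 < α₂ < min(2γα₁/(1−γ) − 1, 1/3), let 0 < μ < 2α₂/(1−γ) and K > 0. Then there exists ε₀ > 0 such that for every ε ∈ (0, ε₀) and every κ with −K ≤ κ < 0 and |κ| > ε^{μ}, the maximizer s_max(κ) = ((1−γ)|κ|/(2γ·c_γ))^{(γ−1)/2} of s ↦ κ·s²/2 − f(s) lies in the interval I_ε = [ε^{α₁}, ε^{−α₂}]. -/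
/-!
Writing `C = (1-γ)/(2γc_γ)` and `β = (γ-1)/2 < 0`, the maximizer is `(C|κ|)^β`, which is
decreasing in `|κ|`. Hence `|κ| ≤ K` bounds it below by the constant `(CK)^β`, which beats
`ε^{α₁} → 0`, and `|κ| > ε^μ` bounds it above by `C^β ε^{μβ}`, which is below `ε^{-α₂}` for small
`ε` because `α₂ + μβ > 0` is exactly the condition `μ < 2α₂/(1-γ)`.
-/

open Set Filter Topology

lemma exists_pos_forall_of_eventually_nhdsGT_zero {p : ℝ → Prop} (h : ∀ᶠ ε in 𝓝[>] 0, p ε) :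
    ∃ ε₀ > 0, ∀ ε, 0 < ε → ε < ε₀ → p ε := by
  obtain ⟨ε₀, hε₀, hsub⟩ := mem_nhdsGT_iff_exists_Ioo_subset.1 h
  exact ⟨ε₀, hε₀, fun ε hε hεε₀ => hsub ⟨hε, hεε₀⟩⟩

lemma eventually_rpow_le_nhdsGT_zero {a c : ℝ} (ha : 0 < a) (hc : 0 < c) :
    ∀ᶠ ε in 𝓝[>] 0, ε ^ a ≤ c := by
  have hlim : Tendsto (fun ε : ℝ => ε ^ a) (𝓝[>] 0) (𝓝 0) := by
    simpa [Real.zero_rpow ha.ne'] using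
      (Real.continuousAt_rpow_const 0 a (Or.inr ha.le)).tendsto.mono_left nhdsWithin_le_nhds
  exact hlim.eventually (eventually_le_nhds hc)

lemma mul_rpow_le_of_rpow_le {C x ε μ β : ℝ} (hC : 0 < C) (hε : 0 < ε) (hx : ε ^ μ ≤ x)
    (hβ : β ≤ 0) : (C * x) ^ β ≤ C ^ β * ε ^ (μ * β) := by
  rw [Real.rpow_mul hε.le, ← Real.mul_rpow hC.le (by positivity)]
  exact Real.rpow_le_rpow_of_nonpos (by positivity) (by gcongr) hβ

theorem statement_10_general (γ cγ α₁ α₂ μ K : ℝ) (hγ₁ : 1/3 < γ) (hγ₂ : γ < 1)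
    (hcγ : cγ = (1 - γ) * (2*γ) ^ (γ/(1-γ)))
    (hα₁ : (1-γ)/(2*γ) < α₁)
    (hμ' : μ < 2*α₂/(1-γ)) (hK : 0 < K) :
    ∃ ε₀ > (0:ℝ), ∀ ε : ℝ, 0 < ε → ε < ε₀ →
      ∀ κ : ℝ, -K ≤ κ → κ < 0 → ε ^ μ < |κ| →
        ((1-γ) * |κ| / (2*γ*cγ)) ^ ((γ-1)/2) ∈ Icc (ε ^ α₁) (ε ^ (-α₂)) := by
  have hγ : 0 < γ := by linarith
  have hcγ₀ : 0 < cγ := hcγ ▸ mul_pos (by linarith) (Real.rpow_pos_of_pos (by linarith) _)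
  set C := (1 - γ) / (2 * γ * cγ)
  have hC : 0 < C := div_pos (by linarith) (by positivity)
  set β := (γ - 1) / 2
  have hβ : β ≤ 0 := show (γ - 1) / 2 ≤ 0 by linarith
  have hα₁₀ : 0 < α₁ := (div_pos (by linarith) (by linarith)).trans hα₁
  have hδ : 0 < α₂ + μ * β := by
    rw [lt_div_iff₀ (by linarith)] at hμ'
    linarith [show μ * β = -(μ * (1 - γ)) / 2 by ring]
  obtain ⟨ε₀, hε₀, hsmall⟩ := exists_pos_forall_of_eventually_nhdsGT_zero <|
    (eventually_rpow_le_nhdsGT_zero hα₁₀ (Real.rpow_pos_of_pos (mul_pos hC hK) β)).and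
      ((tendsto_rpow_neg_nhdsGT_zero (neg_neg_of_pos hδ)).eventually_ge_atTop (C ^ β))
  refine ⟨ε₀, hε₀, fun ε hε hεε₀ κ hκK hκ₀ hκε => ?_⟩
  obtain ⟨hlower, hupper⟩ := hsmall ε hε hεε₀
  have hκ : 0 < |κ| := abs_pos.2 hκ₀.ne
  rw [show (1 - γ) * |κ| / (2 * γ * cγ) = C * |κ| by ring]
  constructor
  · calc ε ^ α₁ ≤ (C * K) ^ β := hlower
      _ ≤ (C * |κ|) ^ β := Real.rpow_le_rpow_of_nonpos (by positivity)
          (by gcongr; rw [abs_of_neg hκ₀]; linarith) hβ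
  · calc (C * |κ|) ^ β ≤ C ^ β * ε ^ (μ * β) := mul_rpow_le_of_rpow_le hC hε hκε.le hβ
      _ ≤ ε ^ (-(α₂ + μ * β)) * ε ^ (μ * β) := by gcongr
      _ = ε ^ (-α₂) := by rw [← Real.rpow_add hε]; ring_nf

/-- Under the parameter conditions on `α₁, α₂`, for `0 < μ < 2α₂/(1−γ)` and
`K > 0` there exists `ε₀ > 0` such that for every `ε ∈ (0, ε₀)` and every `κ` with
`−K ≤ κ < 0` and `|κ| > ε^μ`, the maximizer `s_max(κ) = ((1−γ)|κ|/(2γc_γ))^{(γ−1)/2}` of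
`s ↦ κs²/2 − f(s)` lies in `I_ε = [ε^{α₁}, ε^{−α₂}]`. -/
theorem statement_10 (γ cγ α₁ α₂ μ K : ℝ) (hγ₁ : 1/3 < γ) (hγ₂ : γ < 1)
    (hcγ : cγ = (1 - γ) * (2*γ) ^ (γ/(1-γ)))
    (hα₁ : (1-γ)/(2*γ) < α₁) (hα₁' : α₁ < min 1 ((1-γ)/γ))
    (hα₂ : 0 < α₂) (hα₂' : α₂ < min (2*γ*α₁/(1-γ) - 1) (1/3))
    (hμ : 0 < μ) (hμ' : μ < 2*α₂/(1-γ)) (hK : 0 < K) :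
    ∃ ε₀ > (0:ℝ), ∀ ε : ℝ, 0 < ε → ε < ε₀ →
      ∀ κ : ℝ, -K ≤ κ → κ < 0 → ε ^ μ < |κ| →
        ((1-γ) * |κ| / (2*γ*cγ)) ^ ((γ-1)/2) ∈ Icc (ε ^ α₁) (ε ^ (-α₂)) :=
  statement_10_general γ cγ α₁ α₂ μ K hγ₁ hγ₂ hcγ hα₁ hμ' hK
end

section
/- Let 1/3 < γ < 1, c_γ = (1−γ)·(2γ)^{γ/(1−γ)}, f(s) = c_γ·s^{2γ/(γ−1)}, and let α₁, α₂ satisfy (1−γ)/(2γ) < α₁ < min(1, (1−γ)/γ) and 0 < α₂ < min(2γα₁/(1−γ) − 1, 1/3). Then there exists ε₀ ∈ (0,1) such that for all ε ∈ (0, ε₀): (ε·ε^{α₁})² + (ε²f(ε^{α₁}))² > (ε·ε^{−α₂})² + (ε²f(ε^{−α₂}))²; that is, the left endpoint of the game curve Γ(ε^{α₁}, ε^{−α₂}) is strictly farther from the origin than the right endpoint. -/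
/-!
With `e = 2γ/(γ-1) < 0`, the point of the curve with parameter `s = ε^p` has squared norm
`ε^(2(1+p)) + c_γ² ε^(2(2+pe))`. At `p = α₁` the second term has exponent `2(2+α₁e)`, which
the condition `α₂ < 2γα₁/(1-γ) - 1` makes smaller than `2(1-α₂)`; at `p = -α₂` both terms are
`O(ε^(2(1-α₂)))` because `e < 0`. A strictly smaller power of `ε` wins as `ε → 0⁺`.
-/

open Set Filter Topology Real

lemma sq_curve_point_add_sq {ε : ℝ} (hε : 0 < ε) (c e p : ℝ) :
    (ε * ε ^ p) ^ 2 + (ε ^ 2 * (c * (ε ^ p) ^ e)) ^ 2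
      = ε ^ (2 * (1 + p)) + c ^ 2 * ε ^ (2 * (2 + p * e)) := by
  have hsq : ∀ q : ℝ, (ε ^ q) ^ 2 = ε ^ (2 * q) := fun q => by
    rw [← rpow_mul_natCast hε.le]; push_cast; ring_nf
  have hfirst : ε * ε ^ p = ε ^ (1 + p) := by rw [rpow_add hε, rpow_one]
  have hsecond : ε ^ 2 * (c * (ε ^ p) ^ e) = c * ε ^ (2 + p * e) := by
    rw [← rpow_mul hε.le, rpow_add hε]; norm_cast; ring
  rw [hfirst, hsecond, mul_pow, hsq, hsq]

lemma eventually_mul_rpow_lt_mul_rpow {a b A : ℝ} (hab : a < b) (hA : 0 < A) (B : ℝ) :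
    ∀ᶠ ε in 𝓝[>] (0 : ℝ), B * ε ^ b < A * ε ^ a := by
  have hlim : Tendsto (fun ε : ℝ => B * ε ^ (b - a)) (𝓝[>] 0) (𝓝 0) := by
    have := ((continuousAt_rpow_const 0 (b - a) (Or.inr (sub_pos.2 hab).le)).const_mul B)
    simpa [zero_rpow (sub_pos.2 hab).ne'] using this.tendsto.mono_left nhdsWithin_le_nhds
  filter_upwards [hlim.eventually_lt_const hA, self_mem_nhdsWithin] with ε hsmall (hε : 0 < ε)
  calc B * ε ^ b = B * ε ^ (b - a) * ε ^ a := by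
        rw [mul_assoc, ← rpow_add hε, sub_add_cancel]
    _ < A * ε ^ a := mul_lt_mul_of_pos_right hsmall (rpow_pos_of_pos hε a)

lemma exists_Ioo_forall_of_eventually_nhdsGT {P : ℝ → Prop} (h : ∀ᶠ ε in 𝓝[>] (0 : ℝ), P ε) :
    ∃ ε₀ ∈ Ioo (0 : ℝ) 1, ∀ ε : ℝ, 0 < ε → ε < ε₀ → P ε := by
  obtain ⟨δ, hδ, hP⟩ := (nhdsGT_basis (0 : ℝ)).eventually_iff.1 h
  exact ⟨min δ (1 / 2), ⟨lt_min hδ one_half_pos, (min_le_right _ _).trans_lt one_half_lt_one⟩,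
    fun ε hε hεδ => hP ⟨hε, hεδ.trans_le (min_le_left _ _)⟩⟩

theorem statement_13_general (γ cγ α₁ α₂ : ℝ) (hγ₁ : 1/3 < γ) (hγ₂ : γ < 1)
    (hcγ : cγ = (1 - γ) * (2*γ) ^ (γ/(1-γ)))
    (f : ℝ → ℝ) (hf : ∀ s : ℝ, 0 < s → f s = cγ * s ^ (2*γ/(γ-1)))
    (hα₂ : 0 < α₂) (hα₂' : α₂ < min (2*γ*α₁/(1-γ) - 1) (1/3)) :
    ∃ ε₀ ∈ Ioo (0:ℝ) 1, ∀ ε : ℝ, 0 < ε → ε < ε₀ →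
      (ε * ε ^ α₁)^2 + (ε^2 * f (ε ^ α₁))^2
        > (ε * ε ^ (-α₂))^2 + (ε^2 * f (ε ^ (-α₂)))^2 := by
  set e := 2*γ/(γ-1) with he
  have he_neg : e < 0 := div_neg_of_pos_of_neg (by linarith) (by linarith)
  have hc : 0 < cγ := hcγ ▸ mul_pos (by linarith) (rpow_pos_of_pos (by linarith) _)
  have hα₁e : 2 * (2 + α₁ * e) < 2 * (1 + -α₂) := by
    have : α₁ * e = -(2*γ*α₁/(1-γ)) := by
      rw [he]; field_simp [show γ - 1 ≠ 0 by linarith, show 1 - γ ≠ 0 by linarith]; ring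
    linarith [lt_of_lt_of_le hα₂' (min_le_left _ _)]
  obtain ⟨ε₀, hε₀, hdom⟩ := exists_Ioo_forall_of_eventually_nhdsGT
    (eventually_mul_rpow_lt_mul_rpow hα₁e (pow_pos hc 2) (1 + cγ ^ 2))
  refine ⟨ε₀, hε₀, fun ε hε hεε₀ => ?_⟩
  rw [hf _ (rpow_pos_of_pos hε _), hf _ (rpow_pos_of_pos hε _), sq_curve_point_add_sq hε,
    sq_curve_point_add_sq hε]
  have hright : ε ^ (2 * (2 + -α₂ * e)) ≤ ε ^ (2 * (1 + -α₂)) :=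
    rpow_le_rpow_of_exponent_ge hε (hεε₀.trans hε₀.2).le (by nlinarith)
  calc ε ^ (2 * (1 + -α₂)) + cγ ^ 2 * ε ^ (2 * (2 + -α₂ * e))
      ≤ (1 + cγ ^ 2) * ε ^ (2 * (1 + -α₂)) := by
        linarith [mul_le_mul_of_nonneg_left hright (sq_nonneg cγ)]
    _ < cγ ^ 2 * ε ^ (2 * (2 + α₁ * e)) := hdom ε hε hεε₀
    _ < ε ^ (2 * (1 + α₁)) + cγ ^ 2 * ε ^ (2 * (2 + α₁ * e)) :=
      lt_add_of_pos_left _ (rpow_pos_of_pos hε _)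

/-- Under the parameter conditions on `α₁, α₂` there is `ε₀ ∈ (0,1)` such
that for all `ε ∈ (0, ε₀)` the left endpoint of the game curve `Γ(ε^{α₁}, ε^{−α₂})` is
strictly farther from the origin than the right endpoint:
`(ε·ε^{α₁})² + (ε²f(ε^{α₁}))² > (ε·ε^{−α₂})² + (ε²f(ε^{−α₂}))²`. -/
theorem statement_13 (γ cγ α₁ α₂ : ℝ) (hγ₁ : 1/3 < γ) (hγ₂ : γ < 1)
    (hcγ : cγ = (1 - γ) * (2*γ) ^ (γ/(1-γ)))
    (f : ℝ → ℝ) (hf : ∀ s : ℝ, 0 < s → f s = cγ * s ^ (2*γ/(γ-1)))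
    (hα₁ : (1-γ)/(2*γ) < α₁) (hα₁' : α₁ < min 1 ((1-γ)/γ))
    (hα₂ : 0 < α₂) (hα₂' : α₂ < min (2*γ*α₁/(1-γ) - 1) (1/3)) :
    ∃ ε₀ ∈ Ioo (0:ℝ) 1, ∀ ε : ℝ, 0 < ε → ε < ε₀ →
      (ε * ε ^ α₁)^2 + (ε^2 * f (ε ^ α₁))^2
        > (ε * ε ^ (-α₂))^2 + (ε^2 * f (ε ^ (-α₂)))^2 :=
  statement_13_general γ cγ α₁ α₂ hγ₁ hγ₂ hcγ f hf hα₂ hα₂'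
end
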